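/- Let n be a positive integer not divisible by 3, and let k and l be integers with gcd(n, k, l) = 1 satisfying condition (B): n ∣ k+l or n ∣ 2k−l or n ∣ 2l−k. Then E_n(k,l) is a finite cyclic group of order 3n, G_n(k,l) is cyclic of order 3, and the shift automorphism θ of G_n(k,l) is the identity. -/

import Mathlib

/-!
Let `f : ℤ → H` be `n`-periodic with `f i * f (i + k) * f (i + l) = 1` for all `i`: the generators
`x_i` of `G_n(k,l)`, or the conjugates `a^i x a^{-i}` in `E_n(k,l)`. In each case of (B), after a
cyclic rotation of the three factors, this becomes `f i * f (i + m) * f (i + 2m) = 1` with `m`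
prime to `n`, and comparing the relations at `i` and `i + m` gives `f (i + 3m) = f i`. Since `3m`
is prime to `n`, `f` is constant, with value `x` satisfying `x^3 = 1`. So `G_n(k,l)` is generated by
`x_0` and the shift is trivial, while in `E_n(k,l)` the generators commute with `x^3 = a^n = 1`,
so `xa` generates it. The orders are exactly `3` and `3n` thanks to the homomorphisms
`x_i ↦ 1 ∈ ℤ/3` and `x ↦ (1, 0)`, `a ↦ (0, 1) ∈ ℤ/3 × ℤ/n`.
-/

namespace CPG

/-- The free group on generators `x_0, …, x_{n-1}` indexed by `ZMod n`. -/
abbrev FG (n : ℕ) := FreeGroup (ZMod n)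

/-- The automorphism of the free group sending `x_j` to `x_{j+i}`. -/
def shiftA (n : ℕ) (i : ZMod n) : MulAut (FG n) :=
  FreeGroup.freeGroupCongr (Equiv.addRight i)

/-- The shift automorphism `θ` of the free group, `x_j ↦ x_{j+1}`. -/
def shiftAut (n : ℕ) : MulAut (FG n) := shiftA n 1

/-- The `θ`-orbit of a word `w`: the relator set of the cyclic presentation `P_n(w)`. -/
def rels (n : ℕ) (w : FG n) : Set (FG n) := Set.range fun i : ZMod n => shiftA n i w

/-- The cyclically presented group `G_n(w)`. -/
abbrev Gp (n : ℕ) (w : FG n) := PresentedGroup (rels n w)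

lemma shiftA_shiftA (n : ℕ) (i j : ZMod n) (x : FG n) :
    shiftA n i (shiftA n j x) = shiftA n (j + i) x := by
  show FreeGroup.map _ (FreeGroup.map _ x) = FreeGroup.map _ x
  rw [FreeGroup.map.comp]
  have h : (⇑(Equiv.addRight i) ∘ ⇑(Equiv.addRight j)) = ⇑(Equiv.addRight (j + i)) := by
    funext z
    simp [add_assoc]
  rw [h]

lemma image_shiftAut_rels (n : ℕ) (w : FG n) :
    (shiftAut n) '' rels n w = rels n w := by
  ext r
  constructor
  · rintro ⟨s, ⟨i, rfl⟩, rfl⟩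
    exact ⟨i + 1, (shiftA_shiftA n 1 i w).symm⟩
  · rintro ⟨i, rfl⟩
    refine ⟨shiftA n (i - 1) w, ⟨i - 1, rfl⟩, ?_⟩
    rw [shiftAut, shiftA_shiftA, sub_add_cancel]

lemma map_normalClosure_rels (n : ℕ) (w : FG n) :
    (Subgroup.normalClosure (rels n w)).map (shiftAut n).toMonoidHom
      = Subgroup.normalClosure (rels n w) := by
  rw [Subgroup.map_normalClosure (rels n w) (shiftAut n).toMonoidHom (shiftAut n).surjective]
  congr 1
  exact image_shiftAut_rels n w

/-- The shift automorphism `θ` of the cyclically presented group `G_n(w)`. -/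
def shiftG (n : ℕ) (w : FG n) : MulAut (Gp n w) :=
  QuotientGroup.congr (Subgroup.normalClosure (rels n w)) (Subgroup.normalClosure (rels n w))
    (shiftAut n) (map_normalClosure_rels n w)

/-- The generator `x_k` (subscript mod `n`). -/
def xg (n : ℕ) (k : ℤ) : FG n := FreeGroup.of (k : ZMod n)

/-- The word `x_0 x_k x_l`. -/
def wkl (n : ℕ) (k l : ℤ) : FG n := xg n 0 * xg n k * xg n l

/-- The cyclically presented group `G_n(k,l) = G_n(x_0 x_k x_l)`. -/
abbrev Gkl (n : ℕ) (k l : ℤ) := Gp n (wkl n k l)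

/-- The shift automorphism of `G_n(k,l)`. -/
def shiftKL (n : ℕ) (k l : ℤ) : MulAut (Gkl n k l) := shiftG n (wkl n k l)

end CPG

namespace CPG

/-- The generator `a` of the free group on `{a, x}` (modeled on `Bool`, `a = of false`). -/
def ga : FreeGroup Bool := FreeGroup.of false

/-- The generator `x` of the free group on `{a, x}` (`x = of true`). -/
def gx : FreeGroup Bool := FreeGroup.of true

/-- The relator set of the presentation `(a, x : a^n, W)`. -/
def rels2 (n : ℕ) (W : FreeGroup Bool) : Set (FreeGroup Bool) := {ga ^ n, W}

/-- The group with presentation `(a, x : a^n, W)`. -/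
abbrev E2 (n : ℕ) (W : FreeGroup Bool) := PresentedGroup (rels2 n W)

/-- The image of `a` in `(a, x : a^n, W)`. -/
def a2 (n : ℕ) (W : FreeGroup Bool) : E2 n W := PresentedGroup.of false

/-- The image of `x` in `(a, x : a^n, W)`. -/
def x2 (n : ℕ) (W : FreeGroup Bool) : E2 n W := PresentedGroup.of true

/-- The relator set of `E_n(k,l) = (a, x : a^n, x a^k x a^(l-k) x a^(-l))`. -/
def relsE (n : ℕ) (k l : ℤ) : Set (FreeGroup Bool) :=
  {ga ^ n, gx * ga ^ k * gx * ga ^ (l - k) * gx * ga ^ (-l)}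

/-- The group `E_n(k,l)` with presentation `(a, x : a^n, x a^k x a^(l-k) x a^(-l))`. -/
abbrev Ekl (n : ℕ) (k l : ℤ) := PresentedGroup (relsE n k l)

/-- The image of `a` in `E_n(k,l)`. -/
def aE (n : ℕ) (k l : ℤ) : Ekl n k l := PresentedGroup.of false

/-- The image of `x` in `E_n(k,l)`. -/
def xE (n : ℕ) (k l : ℤ) : Ekl n k l := PresentedGroup.of true

end CPG

open Function

theorem Function.Periodic.apply_eq_of_dvd_sub {β : Type*} {f : ℤ → β} {n x y : ℤ}
    (hper : Periodic f n) (hd : n ∣ y - x) : f y = f x := by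
  obtain ⟨t, ht⟩ := hd
  rw [show y = x + t * n by linear_combination ht]
  exact hper.int_mul t x

theorem Int.isCoprime_of_gcd_gcd_eq_one {n k l : ℤ} (c : ℤ) (hgcd : Int.gcd n (Int.gcd k l) = 1)
    (hd : n ∣ l - c * k) : IsCoprime n k := by
  rw [Int.isCoprime_iff_gcd_eq_one, ← Nat.dvd_one, ← hgcd]
  have hn := Int.gcd_dvd_left n k
  have hk := Int.gcd_dvd_right n k
  have hl : (Int.gcd n k : ℤ) ∣ l := by simpa using (hn.trans hd).add (hk.mul_left c)
  exact Int.natCast_dvd_natCast.mp (Int.dvd_coe_gcd hn (Int.dvd_coe_gcd hk hl))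

theorem Commute.mem_zpowers_mul {G : Type*} [Group G] {x a : G} {m n : ℕ} (h : Commute x a)
    (hx : x ^ m = 1) (ha : a ^ n = 1) (hco : IsCoprime (n : ℤ) m) :
    x ∈ Subgroup.zpowers (x * a) := by
  obtain ⟨u, v, huv⟩ := hco
  refine Subgroup.mem_zpowers_iff.mpr ⟨n * u, ?_⟩
  calc (x * a) ^ ((n : ℤ) * u) = (x ^ n) ^ u * (x ^ m) ^ v := by
        rw [zpow_mul, zpow_natCast, h.mul_pow, ha, mul_one, hx, one_zpow, mul_one]
    _ = x ^ (u * n + v * m) := by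
        rw [zpow_add, mul_comm u, mul_comm v, zpow_mul, zpow_mul, zpow_natCast, zpow_natCast]
    _ = x := by rw [huv, zpow_one]

theorem orderOf_eq_of_pow_eq_one_of_orderOf_map {G H : Type*} [Group G] [Group H] {g : G}
    {m : ℕ} (hg : g ^ m = 1) (φ : G →* H) (hφ : orderOf (φ g) = m) : orderOf g = m :=
  Nat.dvd_antisymm (orderOf_dvd_of_pow_eq_one hg) (hφ ▸ orderOf_map_dvd φ g)

namespace CPG

section Progression

variable {G : Type*} [Group G] {f : ℤ → G}

theorem periodic_three_mul_of_mul_mul_eq_one {m : ℤ}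
    (h : ∀ i, f i * f (i + m) * f (i + 2 * m) = 1) : Periodic f (3 * m) := by
  intro i
  have h₀ := h i
  have h₁ := h (i + m)
  rw [mul_assoc] at h₀
  rw [show i + m + m = i + 2 * m by ring, show i + m + 2 * m = i + 3 * m by ring] at h₁
  exact (eq_inv_of_mul_eq_one_right h₁).trans (eq_inv_of_mul_eq_one_left h₀).symm

theorem exists_isCoprime_mul_mul_eq_one {n k l : ℤ} (hgcd : Int.gcd n (Int.gcd k l) = 1)
    (hB : n ∣ k + l ∨ n ∣ 2 * k - l ∨ n ∣ 2 * l - k) (hper : Periodic f n)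
    (hrel : ∀ i, f i * f (i + k) * f (i + l) = 1) :
    ∃ m, IsCoprime n m ∧ ∀ i, f i * f (i + m) * f (i + 2 * m) = 1 := by
  rcases hB with hB | hB | hB
  · refine ⟨k, Int.isCoprime_of_gcd_gcd_eq_one (-1) hgcd (by convert hB using 1; ring),
      fun i ↦ ?_⟩
    have h := hrel (i + k)
    rw [show i + k + k = i + 2 * k by ring,
      hper.apply_eq_of_dvd_sub (x := i) (y := i + k + l) (by convert hB using 1; ring)] at h
    rw [mul_assoc]
    exact mul_eq_one_comm.mp h
  · refine ⟨k, Int.isCoprime_of_gcd_gcd_eq_one 2 hgcd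
      (by convert Int.dvd_neg.mpr hB using 1; ring), fun i ↦ ?_⟩
    rw [← hper.apply_eq_of_dvd_sub (x := i + 2 * k) (y := i + l)
      (by convert Int.dvd_neg.mpr hB using 1; ring)]
    exact hrel i
  · refine ⟨-l, (Int.isCoprime_of_gcd_gcd_eq_one 2 (Int.gcd_comm k l ▸ hgcd)
      (by convert Int.dvd_neg.mpr hB using 1; ring)).neg_right, fun i ↦ ?_⟩
    have h := hrel (i + 2 * -l)
    rw [show i + 2 * -l + l = i + -l by ring,
      hper.apply_eq_of_dvd_sub (x := i) (y := i + 2 * -l + k)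
        (by convert Int.dvd_neg.mpr hB using 1; ring), mul_assoc] at h
    exact mul_eq_one_comm.mp h

theorem apply_eq_apply_zero_of_mul_mul_eq_one {n k l : ℤ} (h3 : IsCoprime n 3)
    (hgcd : Int.gcd n (Int.gcd k l) = 1) (hB : n ∣ k + l ∨ n ∣ 2 * k - l ∨ n ∣ 2 * l - k)
    (hper : Periodic f n) (hrel : ∀ i, f i * f (i + k) * f (i + l) = 1) (i : ℤ) :
    f i = f 0 := by
  obtain ⟨m, hnm, hm⟩ := exists_isCoprime_mul_mul_eq_one hgcd hB hper hrel
  obtain ⟨u, v, huv⟩ := h3.mul_right hnm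
  have h1 : Periodic f 1 := by
    simpa only [Int.cast_id, huv] using
      (hper.int_mul u).add_period ((periodic_three_mul_of_mul_mul_eq_one hm).int_mul v)
  simpa using h1.int_mul i 0

theorem apply_zero_pow_three {k l : ℤ} (hconst : ∀ i, f i = f 0)
    (hrel : ∀ i, f i * f (i + k) * f (i + l) = 1) : f 0 ^ 3 = 1 := by
  have h := hrel 0
  rwa [hconst (0 + k), hconst (0 + l), ← pow_three'] at h

end Progression

structure HypB (n : ℕ) (k l : ℤ) : Prop where
  not_three_dvd : ¬ 3 ∣ n
  gcd_eq_one : Int.gcd (n : ℤ) (Int.gcd k l) = 1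
  dvd : (n : ℤ) ∣ (k + l) ∨ (n : ℤ) ∣ (2 * k - l) ∨ (n : ℤ) ∣ (2 * l - k)

theorem HypB.coprime_three {n : ℕ} {k l : ℤ} (h : HypB n k l) : Nat.Coprime 3 n :=
  Nat.prime_three.coprime_iff_not_dvd.mpr h.not_three_dvd

theorem HypB.isCoprime_three {n : ℕ} {k l : ℤ} (h : HypB n k l) : IsCoprime (n : ℤ) 3 :=
  Nat.isCoprime_iff_coprime.mpr h.coprime_three.symm

theorem mk_shiftA_eq_one (n : ℕ) (w : FG n) (i : ZMod n) :
    PresentedGroup.mk (rels n w) (shiftA n i w) = 1 :=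
  PresentedGroup.one_of_mem ⟨i, rfl⟩

theorem shiftG_of (n : ℕ) (w : FG n) (j : ZMod n) :
    shiftG n w (PresentedGroup.of j) = PresentedGroup.of (j + 1) :=
  rfl

section Gkl

variable {n : ℕ} {k l : ℤ}

theorem shiftA_wkl (i : ZMod n) :
    shiftA n i (wkl n k l) = FreeGroup.of i * FreeGroup.of (i + k) * FreeGroup.of (i + l) := by
  simp [shiftA, wkl, xg, add_comm]

theorem Gkl.of_mul_of_mul_of_eq_one (i : ZMod n) :
    (PresentedGroup.of i : Gkl n k l) * PresentedGroup.of (i + k) * PresentedGroup.of (i + l)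
      = 1 := by
  have h := mk_shiftA_eq_one n (wkl n k l) i
  rwa [shiftA_wkl, map_mul, map_mul] at h

theorem Gkl.of_eq_of_zero (h : HypB n k l) (j : ZMod n) :
    (PresentedGroup.of j : Gkl n k l) = PresentedGroup.of 0 := by
  obtain ⟨i, rfl⟩ := ZMod.intCast_surjective j
  exact_mod_cast apply_eq_apply_zero_of_mul_mul_eq_one
    (f := fun i : ℤ ↦ (PresentedGroup.of (i : ZMod n) : Gkl n k l))
    h.isCoprime_three h.gcd_eq_one h.dvd (fun i ↦ by simp)
    (fun i ↦ by simpa using Gkl.of_mul_of_mul_of_eq_one (k := k) (l := l) (i : ZMod n)) i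

theorem Gkl.of_zero_pow_three (h : HypB n k l) : (PresentedGroup.of 0 : Gkl n k l) ^ 3 = 1 := by
  have hrel := Gkl.of_mul_of_mul_of_eq_one (k := k) (l := l) (0 : ZMod n)
  rwa [Gkl.of_eq_of_zero h (0 + (k : ZMod n)), Gkl.of_eq_of_zero h (0 + (l : ZMod n)),
    ← pow_three'] at hrel

theorem Gkl.forall_mem_zpowers_of_zero (h : HypB n k l) (y : Gkl n k l) :
    y ∈ Subgroup.zpowers (PresentedGroup.of 0) :=
  PresentedGroup.generated_by _ _ (fun j ↦ Gkl.of_eq_of_zero h j ▸ Subgroup.mem_zpowers _) y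

theorem Gkl.orderOf_of_zero (h : HypB n k l) :
    orderOf (PresentedGroup.of 0 : Gkl n k l) = 3 := by
  have hφ : ∀ r ∈ rels n (wkl n k l),
      FreeGroup.lift (fun _ ↦ Multiplicative.ofAdd (1 : ZMod 3)) r = 1 := by
    rintro _ ⟨i, rfl⟩
    simp only [shiftA_wkl, map_mul, FreeGroup.lift_apply_of]
    decide
  refine orderOf_eq_of_pow_eq_one_of_orderOf_map (Gkl.of_zero_pow_three h)
    (PresentedGroup.toGroup hφ) ?_
  rw [PresentedGroup.toGroup.of, orderOf_ofAdd_eq_addOrderOf, ZMod.addOrderOf_one]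

theorem shiftKL_eq_one (h : HypB n k l) : shiftKL n k l = 1 :=
  MulEquiv.toMonoidHom_injective <| PresentedGroup.ext fun j ↦ (shiftG_of n _ j).trans
    ((Gkl.of_eq_of_zero h (j + 1)).trans (Gkl.of_eq_of_zero h j).symm)

end Gkl

section Ekl

variable {n : ℕ} {k l : ℤ}

theorem Ekl.aE_pow_eq_one : aE n k l ^ n = 1 := by
  have h := PresentedGroup.one_of_mem (rels := relsE n k l) (Set.mem_insert _ _)
  rwa [map_pow] at h

theorem Ekl.relator_eq_one : xE n k l * aE n k l ^ k * xE n k l * aE n k l ^ (l - k) *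
    xE n k l * aE n k l ^ (-l) = 1 := by
  have h := PresentedGroup.one_of_mem (rels := relsE n k l) (Set.mem_insert_of_mem _ rfl)
  simp only [map_mul, map_zpow] at h
  exact h

theorem Ekl.commute_and_pow_three (h : HypB n k l) :
    Commute (xE n k l) (aE n k l) ∧ xE n k l ^ 3 = 1 := by
  set a := aE n k l
  set x := xE n k l
  set f : ℤ → Ekl n k l := fun i ↦ a ^ i * x * (a ^ i)⁻¹ with hf
  have hper : Periodic f n := fun i ↦ by
    simp only [hf, zpow_add, zpow_natCast, Ekl.aE_pow_eq_one, mul_one, a]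
  have hrel : ∀ i, f i * f (i + k) * f (i + l) = 1 := fun i ↦
    calc f i * f (i + k) * f (i + l)
        = a ^ i * (x * a ^ k * x * a ^ (l - k) * x * a ^ (-l)) * (a ^ i)⁻¹ := by
          simp only [hf]; group
      _ = 1 := by rw [Ekl.relator_eq_one]; group
  have hconst := apply_eq_apply_zero_of_mul_mul_eq_one h.isCoprime_three h.gcd_eq_one h.dvd
    hper hrel
  have hconj : a * x * a⁻¹ = x := by simpa [hf] using hconst 1
  exact ⟨(mul_inv_eq_iff_eq_mul.mp hconj).symm,
    by simpa [hf] using apply_zero_pow_three hconst hrel⟩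

theorem Ekl.forall_mem_zpowers_xE_mul_aE (h : HypB n k l) (y : Ekl n k l) :
    y ∈ Subgroup.zpowers (xE n k l * aE n k l) := by
  obtain ⟨hxa, hx3⟩ := Ekl.commute_and_pow_three h
  have hx := hxa.mem_zpowers_mul hx3 Ekl.aE_pow_eq_one h.isCoprime_three
  refine PresentedGroup.generated_by _ _ (fun b ↦ ?_) y
  cases b
  · have ha := Subgroup.mul_mem _ (Subgroup.inv_mem _ hx)
      (Subgroup.mem_zpowers (xE n k l * aE n k l))
    rwa [inv_mul_cancel_left] at ha
  · exact hx

theorem Ekl.orderOf_xE_mul_aE (h : HypB n k l) : orderOf (xE n k l * aE n k l) = 3 * n := by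
  obtain ⟨hxa, hx3⟩ := Ekl.commute_and_pow_three h
  have hpow : (xE n k l * aE n k l) ^ (3 * n) = 1 := by
    rw [hxa.mul_pow, pow_mul, hx3, one_pow, one_mul, mul_comm, pow_mul, Ekl.aE_pow_eq_one,
      one_pow]
  have hφ : ∀ r ∈ relsE n k l, FreeGroup.lift (fun b ↦ bif b
      then (Multiplicative.ofAdd (1 : ZMod 3), 1) else (1, Multiplicative.ofAdd (1 : ZMod n))) r
      = 1 := by
    rintro _ (rfl | rfl)
    · simp only [ga, map_pow, FreeGroup.lift_apply_of, cond_false, Prod.pow_mk, one_pow,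
        ← ofAdd_nsmul, nsmul_one, ZMod.natCast_self, ofAdd_zero, Prod.mk_one_one]
    · simp only [ga, gx, map_mul, map_zpow, FreeGroup.lift_apply_of, cond_false, cond_true]
      refine Prod.ext ?_ ?_ <;>
        simp only [Prod.fst_mul, Prod.snd_mul, Prod.pow_fst, Prod.pow_snd, Prod.fst_one,
          Prod.snd_one, one_zpow, mul_one, one_mul]
      · decide
      · rw [← zpow_add, ← zpow_add, add_sub_cancel, add_neg_cancel, zpow_zero]
  refine orderOf_eq_of_pow_eq_one_of_orderOf_map hpow (PresentedGroup.toGroup hφ) ?_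
  rw [map_mul, xE, aE, PresentedGroup.toGroup.of, PresentedGroup.toGroup.of, cond_true,
    cond_false, Prod.mk_mul_mk, mul_one, one_mul, Prod.orderOf, orderOf_ofAdd_eq_addOrderOf,
    orderOf_ofAdd_eq_addOrderOf, ZMod.addOrderOf_one, ZMod.addOrderOf_one]
  exact h.coprime_three.lcm_eq_mul

end Ekl

end CPG

theorem statement11_general (n : ℕ) (h3 : ¬ (3 ∣ n)) (k l : ℤ)
    (hgcd : Int.gcd (n : ℤ) (Int.gcd k l) = 1)
    (hB : (n : ℤ) ∣ (k + l) ∨ (n : ℤ) ∣ (2 * k - l) ∨ (n : ℤ) ∣ (2 * l - k)) :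
    IsCyclic (CPG.Ekl n k l) ∧ Nat.card (CPG.Ekl n k l) = 3 * n ∧
    IsCyclic (CPG.Gkl n k l) ∧ Nat.card (CPG.Gkl n k l) = 3 ∧
    CPG.shiftKL n k l = 1 := by
  have h : CPG.HypB n k l := ⟨h3, hgcd, hB⟩
  have hEgen := CPG.Ekl.forall_mem_zpowers_xE_mul_aE h
  have hGgen := CPG.Gkl.forall_mem_zpowers_of_zero h
  refine ⟨⟨_, hEgen⟩, ?_, ⟨_, hGgen⟩, ?_, CPG.shiftKL_eq_one h⟩
  · rw [← orderOf_eq_card_of_forall_mem_zpowers hEgen, CPG.Ekl.orderOf_xE_mul_aE h]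
  · rw [← orderOf_eq_card_of_forall_mem_zpowers hGgen, CPG.Gkl.orderOf_of_zero h]

/-- Under condition (B) with `gcd(n,k,l) = 1` and `3 ∤ n`, the group
`E_n(k,l)` is finite cyclic of order `3n`, `G_n(k,l)` is cyclic of order `3`, and the
shift is the identity. -/
theorem statement11 (n : ℕ) (hn : 0 < n) (h3 : ¬ (3 ∣ n)) (k l : ℤ)
    (hgcd : Int.gcd (n : ℤ) (Int.gcd k l) = 1)
    (hB : (n : ℤ) ∣ (k + l) ∨ (n : ℤ) ∣ (2 * k - l) ∨ (n : ℤ) ∣ (2 * l - k)) :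
    IsCyclic (CPG.Ekl n k l) ∧ Nat.card (CPG.Ekl n k l) = 3 * n ∧
    IsCyclic (CPG.Gkl n k l) ∧ Nat.card (CPG.Gkl n k l) = 3 ∧
    CPG.shiftKL n k l = 1 :=
  statement11_general n h3 k l hgcd hB
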